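/- For pairwise distinct real numbers λ_1, …, λ_n and any integer α with 0 ≤ α ≤ n-1, one has ∑_{i=1}^n (∂ρ_r/∂λ_i) · λ_i^α / Δ_i = -δ_{r, n-α} for r = 1, …, n, where ρ_r = (-1)^r σ_r(λ) and Δ_i = ∏_{k≠i}(λ_i - λ_k). That is, the first n basic separable potentials V_r^{(α)} := ∑_i (∂ρ_r/∂λ_i) λ_i^α / Δ_i satisfy V_r^{(α)} = -δ_{r,n-α}. -/

import Mathlib

/-- The `i`-th elementary symmetric polynomial `σ_i(λ₁,…,λ_n)`. -/
noncomputable def esymmF (n i : ℕ) (l : Fin n → ℝ) : ℝ :=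
  ∑ s ∈ Finset.powersetCard i Finset.univ, ∏ j ∈ s, l j

/-- `ρ_i = (-1)^i σ_i(λ)`. -/
noncomputable def rho (n i : ℕ) (l : Fin n → ℝ) : ℝ :=
  (-1) ^ i * esymmF n i l

/-- Partial derivative `∂f/∂λ_j` evaluated at `l`. -/
noncomputable def pd (n : ℕ) (f : (Fin n → ℝ) → ℝ) (l : Fin n → ℝ) (j : Fin n) : ℝ :=
  deriv (fun t => f (Function.update l j t)) (l j)

/-- `Δ_j = ∏_{k≠j} (λ_j - λ_k)`. -/
noncomputable def Delta (n : ℕ) (l : Fin n → ℝ) (j : Fin n) : ℝ :=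
  ∏ k ∈ Finset.univ.erase j, (l j - l k)

open Finset Polynomial

/-- `r`-th elementary symmetric polynomial in the variables other than `i`. -/
noncomputable def Esub (n : ℕ) (l : Fin n → ℝ) (i : Fin n) (r : ℕ) : ℝ :=
  ∑ s ∈ Finset.powersetCard r (Finset.univ.erase i), ∏ j ∈ s, l j

lemma sum_filter_mem_erase (n : ℕ) (l : Fin n → ℝ) (i : Fin n) (m : ℕ) :
    ∑ s ∈ (Finset.powersetCard (m + 1) (Finset.univ : Finset (Fin n))).filter
        (fun s => i ∈ s), ∏ j ∈ s.erase i, l j = Esub n l i m := by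
  unfold Esub
  refine Finset.sum_nbij' (fun s => s.erase i) (fun t => insert i t) ?_ ?_ ?_ ?_ ?_
  · intro s hs
    simp only [Finset.mem_filter, Finset.mem_powersetCard] at hs
    obtain ⟨⟨_, hcard⟩, hi⟩ := hs
    rw [Finset.mem_powersetCard]
    constructor
    · intro j hj
      rw [Finset.mem_erase] at hj ⊢
      exact ⟨hj.1, Finset.mem_univ j⟩
    · rw [Finset.card_erase_of_mem hi, hcard]; omega
  · intro t ht
    rw [Finset.mem_powersetCard] at ht
    obtain ⟨hsub, hcard⟩ := ht
    have hi : i ∉ t := fun h => (Finset.mem_erase.mp (hsub h)).1 rfl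
    simp only [Finset.mem_filter, Finset.mem_powersetCard]
    refine ⟨⟨Finset.subset_univ _, ?_⟩, Finset.mem_insert_self i t⟩
    rw [Finset.card_insert_of_notMem hi, hcard]
  · intro s hs
    simp only [Finset.mem_filter] at hs
    exact Finset.insert_erase hs.2
  · intro t ht
    rw [Finset.mem_powersetCard] at ht
    have hi : i ∉ t := fun h => (Finset.mem_erase.mp (ht.1 h)).1 rfl
    exact Finset.erase_insert hi
  · intro s _
    rfl

/-- The partial derivatives of `ρ_{m+1}`. -/
lemma pd_rho (n : ℕ) (l : Fin n → ℝ) (i : Fin n) (m : ℕ) :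
    pd n (rho n (m + 1)) l i = (-1) ^ (m + 1) * Esub n l i m := by
  classical
  have hfun : ∀ t : ℝ, rho n (m + 1) (Function.update l i t)
      = ((-1) ^ (m + 1) * Esub n l i m) * t
        + (-1) ^ (m + 1) * ∑ s ∈ (Finset.powersetCard (m + 1)
            (Finset.univ : Finset (Fin n))).filter (fun s => i ∉ s), ∏ j ∈ s, l j := by
    intro t
    unfold rho esymmF
    rw [← Finset.sum_filter_add_sum_filter_not (Finset.powersetCard (m + 1) Finset.univ)
      (fun s => i ∈ s)]
    have h1 : ∑ s ∈ (Finset.powersetCard (m + 1)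
        (Finset.univ : Finset (Fin n))).filter (fun s => i ∈ s),
        ∏ j ∈ s, Function.update l i t j = t * Esub n l i m := by
      rw [← sum_filter_mem_erase n l i m, Finset.mul_sum]
      refine Finset.sum_congr rfl fun s hs => ?_
      simp only [Finset.mem_filter] at hs
      rw [← Finset.mul_prod_erase s _ hs.2, Function.update_self]
      congr 1
      refine Finset.prod_congr rfl fun j hj => ?_
      exact Function.update_of_ne (Finset.mem_erase.mp hj).1 _ _
    have h2 : ∑ s ∈ (Finset.powersetCard (m + 1)
        (Finset.univ : Finset (Fin n))).filter (fun s => i ∉ s),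
        ∏ j ∈ s, Function.update l i t j
        = ∑ s ∈ (Finset.powersetCard (m + 1)
        (Finset.univ : Finset (Fin n))).filter (fun s => i ∉ s), ∏ j ∈ s, l j := by
      refine Finset.sum_congr rfl fun s hs => Finset.prod_congr rfl fun j hj => ?_
      simp only [Finset.mem_filter] at hs
      refine Function.update_of_ne (fun h => hs.2 ?_) _ _
      rwa [h] at hj
    rw [h1, h2]
    ring
  unfold pd
  have : (fun t => rho n (m + 1) (Function.update l i t))
      = fun t => ((-1) ^ (m + 1) * Esub n l i m) * t
        + (-1) ^ (m + 1) * ∑ s ∈ (Finset.powersetCard (m + 1)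
            (Finset.univ : Finset (Fin n))).filter (fun s => i ∉ s), ∏ j ∈ s, l j :=
    funext hfun
  rw [this]
  have hd : HasDerivAt (fun t : ℝ => ((-1) ^ (m + 1) * Esub n l i m) * t
      + (-1) ^ (m + 1) * ∑ s ∈ (Finset.powersetCard (m + 1)
          (Finset.univ : Finset (Fin n))).filter (fun s => i ∉ s), ∏ j ∈ s, l j)
      ((-1) ^ (m + 1) * Esub n l i m) (l i) := by
    simpa using ((hasDerivAt_id (l i)).const_mul
      ((-1 : ℝ) ^ (m + 1) * Esub n l i m)).add_const ((-1) ^ (m + 1) * ∑ s ∈ (Finset.powersetCard (m + 1)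
          (Finset.univ : Finset (Fin n))).filter (fun s => i ∉ s), ∏ j ∈ s, l j)
  exact hd.deriv

/-- The coefficients of `∏_{k ≠ i} (X - λ_k)`. -/
lemma coeff_Q (n : ℕ) (l : Fin n → ℝ) (i : Fin n) (r : ℕ) (hr : r ≤ n - 1) :
    (∏ k ∈ Finset.univ.erase i, (X - C (l k))).coeff (n - 1 - r)
      = (-1) ^ r * Esub n l i r := by
  classical
  have hcard : Multiset.card (((Finset.univ.erase i).val).map l) = n - 1 := by
    rw [Multiset.card_map]
    simp [Finset.card_erase_of_mem (Finset.mem_univ i)]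
  have hk : n - 1 - r ≤ Multiset.card (((Finset.univ.erase i).val).map l) := by
    rw [hcard]; omega
  have h := Multiset.prod_X_sub_C_coeff (((Finset.univ.erase i).val).map l) hk
  rw [hcard] at h
  have hsub : n - 1 - (n - 1 - r) = r := by omega
  rw [hsub] at h
  have hprod : ((((Finset.univ.erase i).val).map l).map fun t => X - C t).prod
      = ∏ k ∈ Finset.univ.erase i, (X - C (l k)) := by
    rw [Multiset.map_map]
    rfl
  rw [hprod] at h
  rw [h, Finset.esymm_map_val]
  rfl

/-- Lagrange basis in terms of `Delta`. -/
lemma basis_eq (n : ℕ) (l : Fin n → ℝ) (i : Fin n) :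
    Lagrange.basis Finset.univ l i
      = C (Delta n l i)⁻¹ * ∏ k ∈ Finset.univ.erase i, (X - C (l k)) := by
  unfold Lagrange.basis Lagrange.basisDivisor Delta
  rw [Finset.prod_mul_distrib, ← Finset.prod_inv_distrib, ← map_prod]

theorem trivial_basic_potentials (n : ℕ) (l : Fin n → ℝ) (hl : Function.Injective l)
    (a : ℕ) (ha : a ≤ n - 1) (r : Fin n) :
    ∑ i, pd n (rho n ((r : ℕ) + 1)) l i * l i ^ a / Delta n l i
      = -(if (r : ℕ) + 1 = n - a then 1 else 0) := by
  classical
  have hn : 0 < n := r.pos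
  have hrn : (r : ℕ) < n := r.2
  -- Lagrange interpolation of X^a
  have hdeg : (X ^ a : ℝ[X]).degree < (Finset.univ : Finset (Fin n)).card := by
    rw [degree_X_pow, Finset.card_univ, Fintype.card_fin]
    exact_mod_cast (by omega : a < n)
  have hinj : Set.InjOn l (Finset.univ : Finset (Fin n)) := hl.injOn
  have hL := Lagrange.eq_interpolate hinj hdeg
  -- take coefficient n-1-r of both sides
  have hco := congrArg (fun p : ℝ[X] => p.coeff (n - 1 - (r : ℕ))) hL
  simp only [Lagrange.interpolate_apply, Polynomial.finset_sum_coeff, coeff_X_pow,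
    eval_pow, eval_X] at hco
  have hterm : ∀ i : Fin n,
      (C (l i ^ a) * Lagrange.basis Finset.univ l i).coeff (n - 1 - (r : ℕ))
        = l i ^ a * (Delta n l i)⁻¹ * ((-1) ^ (r : ℕ) * Esub n l i (r : ℕ)) := by
    intro i
    rw [basis_eq, ← mul_assoc, ← C_mul, coeff_C_mul,
      coeff_Q n l i (r : ℕ) (by omega)]
  simp only [hterm] at hco
  have hcond : (n - 1 - (r : ℕ) = a) ↔ ((r : ℕ) + 1 = n - a) := by omega
  -- rewrite the goal
  have hgoal : ∑ i, pd n (rho n ((r : ℕ) + 1)) l i * l i ^ a / Delta n l i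
      = -∑ i, l i ^ a * (Delta n l i)⁻¹ * ((-1) ^ (r : ℕ) * Esub n l i (r : ℕ)) := by
    rw [← Finset.sum_neg_distrib]
    refine Finset.sum_congr rfl fun i _ => ?_
    rw [pd_rho, pow_succ, div_eq_mul_inv]
    ring
  rw [hgoal, ← hco]
  by_cases h : (r : ℕ) + 1 = n - a
  · rw [if_pos (hcond.mpr h), if_pos h]
  · rw [if_neg (fun hc => h (hcond.mp hc)), if_neg h]
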